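/- arXiv:2504.15173 — 4 statements merged into one kernel-verified Lean document; each statement's English description precedes it below -/
import Mathlib

section
/- Let V be a real inner product space, m, v_s ∈ V, ρ⁺, ρ⁻ ∈ ℝ, v_f⁺, v_f⁻ ∈ V, and linear maps T_s⁺, T_s⁻, T_f⁺, T_f⁻ : V → V. Set k^± := ½ρ^±‖v_f^±‖², assume ρ⁺⟨v_f⁺ − v_s, m⟩ = ρ⁻⟨v_f⁻ − v_s, m⟩ =: d, and assume the mixture momentum jump condition d(v_f⁺ − v_f⁻) − ((T_s⁺ + T_f⁺) − (T_s⁻ + T_f⁻))m = 0. Then the interfacial boundary term of the power balance satisfies: (k⁺⟨v_f⁺ − v_s, m⟩ − ⟨T_f⁺ m, v_f⁺⟩ − ⟨T_s⁺ m, v_s⟩) − (k⁻⟨v_f⁻ − v_s, m⟩ − ⟨T_f⁻ m, v_f⁻⟩ − ⟨T_s⁻ m, v_s⟩) = ½ d (‖v_f⁺ − v_s‖² − ‖v_f⁻ − v_s‖²) − (⟨T_f⁺ m, v_f⁺ − v_s⟩ − ⟨T_f⁻ m, v_f⁻ − v_s⟩). -/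
open RealInnerProductSpace

/-- Interfacial boundary term of the power balance: with `k^± := ½ρ^±‖v_f^±‖²`, continuous
relative normal mass flux `d`, and the mixture momentum jump condition, the jump of
`k⟨v_f − v_s, m⟩ − ⟨T_f m, v_f⟩ − ⟨T_s m, v_s⟩` equals
`½ d ⟦‖v_f − v_s‖²⟧ − ⟦⟨T_f m, v_f − v_s⟩⟧`. -/
theorem interfacial_power_boundary_term
    {V : Type*} [NormedAddCommGroup V] [InnerProductSpace ℝ V]
    (m vs vfP vfM : V) (ρP ρM d : ℝ)
    (TsP TsM TfP TfM : V →ₗ[ℝ] V)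
    (kP kM : ℝ)
    (hkP : kP = (1 / 2) * ρP * ‖vfP‖ ^ 2) (hkM : kM = (1 / 2) * ρM * ‖vfM‖ ^ 2)
    (hdP : ρP * ⟪vfP - vs, m⟫ = d) (hdM : ρM * ⟪vfM - vs, m⟫ = d)
    (hjump : d • (vfP - vfM) - ((TsP + TfP) - (TsM + TfM)) m = 0) :
    (kP * ⟪vfP - vs, m⟫ - ⟪TfP m, vfP⟫ - ⟪TsP m, vs⟫)
        - (kM * ⟪vfM - vs, m⟫ - ⟪TfM m, vfM⟫ - ⟪TsM m, vs⟫)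
      = (1 / 2) * d * (‖vfP - vs‖ ^ 2 - ‖vfM - vs‖ ^ 2)
        - (⟪TfP m, vfP - vs⟫ - ⟪TfM m, vfM - vs⟫) := by
  subst hkP hkM
  have hj : d • (vfP - vfM) = ((TsP + TfP) - (TsM + TfM)) m := by
    rw [← sub_eq_zero]; exact hjump
  have hjs : ⟪d • (vfP - vfM), vs⟫ = ⟪((TsP + TfP) - (TsM + TfM)) m, vs⟫ := by rw [hj]
  simp only [LinearMap.sub_apply, LinearMap.add_apply, inner_sub_left, inner_add_left,
    real_inner_smul_left] at hjs
  have nP : ‖vfP - vs‖ ^ 2 = ‖vfP‖ ^ 2 - 2 * ⟪vfP, vs⟫ + ‖vs‖ ^ 2 := by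
    rw [norm_sub_sq_real]
  have nM : ‖vfM - vs‖ ^ 2 = ‖vfM‖ ^ 2 - 2 * ⟪vfM, vs⟫ + ‖vs‖ ^ 2 := by
    rw [norm_sub_sq_real]
  simp only [inner_sub_left, inner_sub_right] at *
  rw [nP, nM]
  linear_combination (1/2 * ‖vfP‖ ^ 2) * hdP - (1/2 * ‖vfM‖ ^ 2) * hdM + hjs
end

section
/- Let φ_f, p : ℝ³ → ℝ and v_s, v_f : ℝ³ → ℝ³ be differentiable at x ∈ ℝ³, let μ_f, μ_B, μ_D, κ ∈ ℝ with κ ≠ 0, and let Tᵉ be a symmetric 3×3 matrix. Set φ_s := 1 − φ_f, L_a := Dv_a(x) (the Fréchet derivative, identified with a 3×3 matrix), D_a := ½(L_a + L_aᵀ) for a = s, f, T_f := −p φ_f I + 2μ_f D_f + 2μ_B(D_f − D_s), T_s := −p φ_s I + Tᵉ + 2μ_B(D_s − D_f), and p_f := p ∇φ_f − (μ_D φ_f²/κ)(v_f − v_s), all evaluated at x. If div(φ_s v_s + φ_f v_f) = 0 at x, then ⟨T_f, L_f⟩ + ⟨T_s, L_s⟩ − ⟨p_f, v_f − v_s⟩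 = ⟨Tᵉ, L_s⟩ + 2μ_f‖D_f‖² + 2μ_B‖D_f − D_s‖² + (μ_D φ_f²/κ)‖v_f − v_s‖², where ⟨A,B⟩ := trace(AᵀB) for matrices and the Euclidean inner product for vectors. -/
/-!
Expanding the stresses by bilinearity of `⟨·, ·⟩`, all pressure terms collect into
`-p ((1 - φ_f) tr L_s + φ_f tr L_f + ∇φ_f · (v_f - v_s))`, which is `-p div(φ_s v_s + φ_f v_f)`
by the product rule and therefore vanishes. The viscous terms become squared norms because a
symmetric `D` pairs with `L` exactly as with `Lᵀ`, so `⟨D, D⟩ = ⟨D, L⟩` whenever `D` is the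
symmetric part of `L`; and `D_f - D_s` is the symmetric part of `L_f - L_s`.
-/

open RealInnerProductSpace

noncomputable section

/-- The divergence of a vector field on ℝ³: the trace of its Fréchet derivative. -/
def div3 (w : EuclideanSpace ℝ (Fin 3) → EuclideanSpace ℝ (Fin 3))
    (x : EuclideanSpace ℝ (Fin 3)) : ℝ :=
  LinearMap.trace ℝ (EuclideanSpace ℝ (Fin 3)) (fderiv ℝ w x).toLinearMap

/-- The Frobenius inner product `⟨A,B⟩ = trace(Aᵀ B)` of two linear operators on ℝ³
(the transpose realized as the adjoint). -/
def fip (A B : EuclideanSpace ℝ (Fin 3) →L[ℝ] EuclideanSpace ℝ (Fin 3)) : ℝ :=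
  LinearMap.trace ℝ (EuclideanSpace ℝ (Fin 3))
    ((ContinuousLinearMap.adjoint A).comp B).toLinearMap

section TraceAdjoint

open ContinuousLinearMap

variable {E : Type*} [NormedAddCommGroup E] [InnerProductSpace ℝ E] [FiniteDimensional ℝ E]

theorem trace_adjoint (A : E →L[ℝ] E) :
    LinearMap.trace ℝ E (adjoint A).toLinearMap = LinearMap.trace ℝ E A.toLinearMap := by
  simp only [LinearMap.trace_eq_sum_inner _ (stdOrthonormalBasis ℝ E), coe_coe,
    adjoint_inner_right, real_inner_comm]

theorem trace_adjoint_comp_adjoint (A B : E →L[ℝ] E) :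
    LinearMap.trace ℝ E ((adjoint A).comp (adjoint B)).toLinearMap
      = LinearMap.trace ℝ E (A.comp B).toLinearMap := by
  rw [← adjoint_comp, trace_adjoint, toLinearMap_comp, toLinearMap_comp,
    LinearMap.trace_comp_comm']

end TraceAdjoint

section TraceFDeriv

variable {𝕜 E : Type*} [NontriviallyNormedField 𝕜] [NormedAddCommGroup E] [NormedSpace 𝕜 E]
  [FiniteDimensional 𝕜 E]

theorem trace_fderiv_smul {f : E → 𝕜} {v : E → E} {x : E}
    (hf : DifferentiableAt 𝕜 f x) (hv : DifferentiableAt 𝕜 v x) :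
    LinearMap.trace 𝕜 E (fderiv 𝕜 (fun y => f y • v y) x).toLinearMap
      = f x * LinearMap.trace 𝕜 E (fderiv 𝕜 v x).toLinearMap + fderiv 𝕜 f x (v x) := by
  rw [fderiv_fun_smul hf hv]
  simp

theorem trace_fderiv_one_sub_smul_add_smul {φ : E → 𝕜} {u w : E → E} {x : E}
    (hφ : DifferentiableAt 𝕜 φ x) (hu : DifferentiableAt 𝕜 u x) (hw : DifferentiableAt 𝕜 w x) :
    LinearMap.trace 𝕜 E (fderiv 𝕜 (fun y => (1 - φ y) • u y + φ y • w y) x).toLinearMap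
      = (1 - φ x) * LinearMap.trace 𝕜 E (fderiv 𝕜 u x).toLinearMap
        + φ x * LinearMap.trace 𝕜 E (fderiv 𝕜 w x).toLinearMap + fderiv 𝕜 φ x (w x - u x) := by
  have hψ : DifferentiableAt 𝕜 (fun y => 1 - φ y) x := hφ.const_sub 1
  rw [fderiv_fun_add (f := fun y => (1 - φ y) • u y) (g := fun y => φ y • w y)
    (hψ.smul hu) (hφ.smul hw), ContinuousLinearMap.toLinearMap_add, map_add,
    trace_fderiv_smul hψ hu, trace_fderiv_smul hφ hw, fderiv_const_sub, map_sub]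
  simp only [neg_apply]
  ring

end TraceFDeriv

local notation "ℝ³" => EuclideanSpace ℝ (Fin 3)

section FrobeniusInner

open ContinuousLinearMap

variable (A B C : ℝ³ →L[ℝ] ℝ³) (c : ℝ)

theorem fip_add_left : fip (A + B) C = fip A C + fip B C := by
  simp [fip, add_comp]

theorem fip_sub_left : fip (A - B) C = fip A C - fip B C := by
  simp [fip, sub_comp]

theorem fip_smul_left : fip (c • A) B = c * fip A B := by
  simp [fip, smul_comp]

theorem fip_add_right : fip A (B + C) = fip A B + fip A C := by
  simp [fip, comp_add]

theorem fip_smul_right : fip A (c • B) = c * fip A B := by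
  simp [fip]

theorem fip_sub_right : fip A (B - C) = fip A B - fip A C := by
  simp [fip, comp_sub]

theorem fip_id_left :
    fip (ContinuousLinearMap.id ℝ ℝ³) A = LinearMap.trace ℝ ℝ³ A.toLinearMap := by
  rw [fip, adjoint_id, id_comp]

theorem fip_adjoint_right {S : ℝ³ →L[ℝ] ℝ³} (hS : IsSelfAdjoint S) :
    fip S (adjoint A) = fip S A := by
  rw [fip, trace_adjoint_comp_adjoint, fip, hS.adjoint_eq]

theorem fip_self_of_eq_symmPart {D L : ℝ³ →L[ℝ] ℝ³} (hD : D = (1 / 2 : ℝ) • (L + adjoint L)) :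
    fip D D = fip D L := by
  have hD_sa : IsSelfAdjoint D := hD ▸ (IsSelfAdjoint.all _).smul (IsSelfAdjoint.add_star_self L)
  nth_rewrite 2 [hD]
  rw [fip_smul_right, fip_add_right, fip_adjoint_right L hD_sa]
  ring

end FrobeniusInner

theorem interior_dissipation_identity_general
    (φf p : EuclideanSpace ℝ (Fin 3) → ℝ)
    (vs vf : EuclideanSpace ℝ (Fin 3) → EuclideanSpace ℝ (Fin 3))
    (x : EuclideanSpace ℝ (Fin 3))
    (hφf : DifferentiableAt ℝ φf x)
    (hvs : DifferentiableAt ℝ vs x) (hvf : DifferentiableAt ℝ vf x)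
    (μf μB μD κ : ℝ)
    (Te : EuclideanSpace ℝ (Fin 3) →L[ℝ] EuclideanSpace ℝ (Fin 3))
    (Ls Lf Ds Df Ts Tf : EuclideanSpace ℝ (Fin 3) →L[ℝ] EuclideanSpace ℝ (Fin 3))
    (hLs : Ls = fderiv ℝ vs x) (hLf : Lf = fderiv ℝ vf x)
    (hDs : Ds = (1 / 2 : ℝ) • (Ls + ContinuousLinearMap.adjoint Ls))
    (hDf : Df = (1 / 2 : ℝ) • (Lf + ContinuousLinearMap.adjoint Lf))
    (hTf : Tf = -(p x * φf x) • (ContinuousLinearMap.id ℝ (EuclideanSpace ℝ (Fin 3)))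
      + (2 * μf) • Df + (2 * μB) • (Df - Ds))
    (hTs : Ts = -(p x * (1 - φf x)) • (ContinuousLinearMap.id ℝ (EuclideanSpace ℝ (Fin 3)))
      + Te + (2 * μB) • (Ds - Df))
    (pf : EuclideanSpace ℝ (Fin 3))
    (hpf : pf = p x • gradient φf x - (μD * (φf x) ^ 2 / κ) • (vf x - vs x))
    (hdiv : div3 (fun y => (1 - φf y) • vs y + φf y • vf y) x = 0) :
    fip Tf Lf + fip Ts Ls - ⟪pf, vf x - vs x⟫
      = fip Te Ls + 2 * μf * fip Df Df + 2 * μB * fip (Df - Ds) (Df - Ds)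
        + (μD * (φf x) ^ 2 / κ) * ‖vf x - vs x‖ ^ 2 := by
  have hmass : (1 - φf x) * LinearMap.trace ℝ ℝ³ Ls.toLinearMap
      + φf x * LinearMap.trace ℝ ℝ³ Lf.toLinearMap + fderiv ℝ φf x (vf x - vs x) = 0 := by
    rw [← hdiv, div3, trace_fderiv_one_sub_smul_add_smul hφf hvs hvf, hLs, hLf]
  have hK : Df - Ds = (1 / 2 : ℝ) • ((Lf - Ls) + ContinuousLinearMap.adjoint (Lf - Ls)) := by
    rw [hDf, hDs, map_sub]
    module
  rw [fip_self_of_eq_symmPart hDf, fip_self_of_eq_symmPart hK, hTf, hTs, hpf, inner_sub_left,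
    real_inner_smul_left, real_inner_smul_left, inner_gradient_left, real_inner_self_eq_norm_sq]
  simp only [fip_add_left, fip_sub_left, fip_smul_left, fip_sub_right, fip_id_left]
  linear_combination (-(p x)) * hmass

/-- Pointwise interior dissipation identity for a saturated biphasic mixture of incompressible
constituents: if `div(φ_s v_s + φ_f v_f) = 0` at `x`, then
`⟨T_f, L_f⟩ + ⟨T_s, L_s⟩ − ⟨p_f, v_f − v_s⟩
  = ⟨Tᵉ, L_s⟩ + 2μ_f‖D_f‖² + 2μ_B‖D_f − D_s‖² + (μ_D φ_f²/κ)‖v_f − v_s‖²`. -/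
theorem interior_dissipation_identity
    (φf p : EuclideanSpace ℝ (Fin 3) → ℝ)
    (vs vf : EuclideanSpace ℝ (Fin 3) → EuclideanSpace ℝ (Fin 3))
    (x : EuclideanSpace ℝ (Fin 3))
    (hφf : DifferentiableAt ℝ φf x) (hp : DifferentiableAt ℝ p x)
    (hvs : DifferentiableAt ℝ vs x) (hvf : DifferentiableAt ℝ vf x)
    (μf μB μD κ : ℝ) (hκ : κ ≠ 0)
    (Te : EuclideanSpace ℝ (Fin 3) →L[ℝ] EuclideanSpace ℝ (Fin 3))
    (hTe : IsSelfAdjoint Te)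
    (Ls Lf Ds Df Ts Tf : EuclideanSpace ℝ (Fin 3) →L[ℝ] EuclideanSpace ℝ (Fin 3))
    (hLs : Ls = fderiv ℝ vs x) (hLf : Lf = fderiv ℝ vf x)
    (hDs : Ds = (1 / 2 : ℝ) • (Ls + ContinuousLinearMap.adjoint Ls))
    (hDf : Df = (1 / 2 : ℝ) • (Lf + ContinuousLinearMap.adjoint Lf))
    (hTf : Tf = -(p x * φf x) • (ContinuousLinearMap.id ℝ (EuclideanSpace ℝ (Fin 3)))
      + (2 * μf) • Df + (2 * μB) • (Df - Ds))
    (hTs : Ts = -(p x * (1 - φf x)) • (ContinuousLinearMap.id ℝ (EuclideanSpace ℝ (Fin 3)))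
      + Te + (2 * μB) • (Ds - Df))
    (pf : EuclideanSpace ℝ (Fin 3))
    (hpf : pf = p x • gradient φf x - (μD * (φf x) ^ 2 / κ) • (vf x - vs x))
    (hdiv : div3 (fun y => (1 - φf y) • vs y + φf y • vf y) x = 0) :
    fip Tf Lf + fip Ts Ls - ⟪pf, vf x - vs x⟫
      = fip Te Ls + 2 * μf * fip Df Df + 2 * μB * fip (Df - Ds) (Df - Ds)
        + (μD * (φf x) ^ 2 / κ) * ‖vf x - vs x‖ ^ 2 :=
  interior_dissipation_identity_general φf p vs vf x hφf hvs hvf μf μB μD κ Te Ls Lf Ds Df Ts Tf hLs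
    hLf hDs hDf hTf hTs pf hpf hdiv
end
end

section
/- Let V be a real inner product space and m ∈ V. Let k⁺, k⁻, φ⁺, φ⁻, d, 𝔭, μ_S ∈ ℝ and v_f⁺, v_f⁻, w, ξ_f ∈ V, and let T_f⁺, T_f⁻ : V → V be linear maps. Assume the two-sided interface conditions k^± m − d v_f^± + φ^± 𝔭 m + T_f^± m − ½ φ^± μ_S w = 0, and assume that ξ_f satisfies the fluid momentum jump condition d (v_f⁺ − v_f⁻) − (T_f⁺ − T_f⁻) m + ξ_f = 0. Then ξ_f = ½ μ_S (φ⁺ − φ⁻) w − ( (k⁺ + φ⁺ 𝔭) − (k⁻ + φ⁻ 𝔭) ) m. -/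
open RealInnerProductSpace

/-- Constitutive form of the interfacial interaction force `ξ_f`: if the two-sided interface
conditions `k m − d v_f + φ 𝔭 m + T_f m − ½ φ μ_S w = 0` hold and `ξ_f` satisfies the fluid
momentum jump condition `d⟦v_f⟧ − ⟦T_f⟧m + ξ_f = 0`, then
`ξ_f = ½ μ_S ⟦φ⟧ w − ⟦k + φ 𝔭⟧ m`. -/
theorem interfacial_force_constitutive_form
    {V : Type*} [NormedAddCommGroup V] [InnerProductSpace ℝ V]
    (m : V) (kP kM φP φM d 𝔭 μS : ℝ) (vfP vfM w ξf : V)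
    (TfP TfM : V →ₗ[ℝ] V)
    (hP : kP • m - d • vfP + (φP * 𝔭) • m + TfP m - ((1 / 2) * φP * μS) • w = 0)
    (hM : kM • m - d • vfM + (φM * 𝔭) • m + TfM m - ((1 / 2) * φM * μS) • w = 0)
    (hjump : d • (vfP - vfM) - (TfP m - TfM m) + ξf = 0) :
    ξf = ((1 / 2) * μS * (φP - φM)) • w - ((kP + φP * 𝔭) - (kM + φM * 𝔭)) • m := by
  have h := sub_eq_zero.mpr (hP.trans hM.symm)
  linear_combination (norm := module) h + hjump
end

section
/- Let H, δ, η, γ be positive real numbers. Then there exists a unique pair of functions V_u : [0, H] → ℝ and V_l : [−1, 0] → ℝ, each twice continuously differentiable on its (closed) interval, satisfying: V_u″(Z) + 1 = 0 for Z ∈ (0, H); δ² V_l″(Z) − V_l(Z) + η δ² = 0 for Z ∈ (−1, 0); the boundary conditions V_u(H) = 0 and V_l(−1) = 0; and the interface conditions V_u′(0) = ½ γ (V_u(0) − V_l(0)) and V_l′(0) = ½ γ η (V_u(0) − V_l(0)). -/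
/-!
Both equations are linear with constant coefficients, so on each layer a solution is determined
by its value and slope at the interface `Z = 0`: `Vu` is a parabola and `Vl - η δ²` a combination
of `cosh (Z / δ)` and `sinh (Z / δ)`. The wall condition `Vu H = 0` and the two interface
conditions express all four constants through the velocity jump `d = Vu 0 - Vl 0`, and the
remaining condition `Vl (-1) = 0` becomes a linear equation for `d` whose coefficient
`(1 + γ H / 2) cosh (1 / δ) + γ η δ / 2 sinh (1 / δ)` is positive. So there is exactly one
solution, and it is explicit.
-/

noncomputable section

/-- `Vu`, `Vl` solve the dimensionless Beavers–Joseph boundary value problem for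
pressure-driven flow of a viscous fluid over a rigid porous medium, with channel height `H`,
permeability parameter `δ`, viscosity ratio `η`, and interface viscosity ratio `γ`. -/
def IsBJSolution (H δ η γ : ℝ) (Vu Vl : ℝ → ℝ) : Prop :=
  ContDiffOn ℝ 2 Vu (Set.Icc 0 H) ∧
  ContDiffOn ℝ 2 Vl (Set.Icc (-1) 0) ∧
  (∀ Z ∈ Set.Ioo (0 : ℝ) H, iteratedDerivWithin 2 Vu (Set.Icc 0 H) Z + 1 = 0) ∧
  (∀ Z ∈ Set.Ioo (-1 : ℝ) 0,
    δ ^ 2 * iteratedDerivWithin 2 Vl (Set.Icc (-1) 0) Z - Vl Z + η * δ ^ 2 = 0) ∧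
  Vu H = 0 ∧
  Vl (-1) = 0 ∧
  derivWithin Vu (Set.Icc 0 H) 0 = (1 / 2) * γ * (Vu 0 - Vl 0) ∧
  derivWithin Vl (Set.Icc (-1) 0) 0 = (1 / 2) * γ * η * (Vu 0 - Vl 0)

open Set Real

namespace Convex

variable {s : Set ℝ} {x₀ x : ℝ}

theorem eq_of_hasDerivWithinAt_zero {G : Type*} [NormedAddCommGroup G] [NormedSpace ℝ G]
    (hs : Convex ℝ s) {f : ℝ → G} (hf : ∀ y ∈ s, HasDerivWithinAt f 0 s y)
    (hx₀ : x₀ ∈ s) (hx : x ∈ s) : f x = f x₀ := by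
  simpa [sub_eq_zero] using
    hs.norm_image_sub_le_of_norm_hasDerivWithin_le (C := 0) hf (fun _ _ ↦ by simp) hx₀ hx

theorem eq_mul_exp_of_hasDerivWithinAt (hs : Convex ℝ s) {p : ℝ → ℝ} {c : ℝ}
    (hp : ∀ y ∈ s, HasDerivWithinAt p (c * p y) s y) (hx₀ : x₀ ∈ s) (hx : x ∈ s) :
    p x = p x₀ * exp (c * (x - x₀)) := by
  have hconst : ∀ y ∈ s, HasDerivWithinAt (fun y ↦ p y * exp (-(c * (y - x₀)))) 0 s y := by
    intro y hy
    have hexp := (((hasDerivAt_id y).sub_const x₀).const_mul c).neg.exp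
    exact ((hp y hy).fun_mul hexp.hasDerivWithinAt).congr_deriv (by ring)
  have h := hs.eq_of_hasDerivWithinAt_zero hconst hx₀ hx
  simp only [sub_self, mul_zero, neg_zero, exp_zero, mul_one] at h
  rw [← h, mul_assoc, ← exp_add, neg_add_cancel, exp_zero, mul_one]

theorem eq_quadratic_of_hasDerivWithinAt (hs : Convex ℝ s) {f f' : ℝ → ℝ} {c : ℝ}
    (hf : ∀ y ∈ s, HasDerivWithinAt f (f' y) s y) (hf' : ∀ y ∈ s, HasDerivWithinAt f' c s y)
    (hx₀ : x₀ ∈ s) (hx : x ∈ s) :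
    f x = f x₀ + f' x₀ * (x - x₀) + c / 2 * (x - x₀) ^ 2 := by
  have hf'_affine : ∀ y ∈ s, f' y = f' x₀ + c * (y - x₀) := by
    intro y hy
    have h := hs.eq_of_hasDerivWithinAt_zero (f := fun y ↦ f' y - c * y)
      (fun z hz ↦ ((hf' z hz).fun_sub ((hasDerivWithinAt_id z s).const_mul c)).congr_deriv
        (by simp)) hx₀ hy
    linear_combination h
  have hq : ∀ y, HasDerivAt (fun y ↦ f' x₀ * (y - x₀) + c / 2 * (y - x₀) ^ 2)
      (f' x₀ + c * (y - x₀)) y := fun y ↦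
    ((((hasDerivAt_id' y).sub_const x₀).const_mul (f' x₀)).fun_add
      ((((hasDerivAt_id' y).sub_const x₀).fun_pow 2).const_mul (c / 2))).congr_deriv
      (by ring)
  have h := hs.eq_of_hasDerivWithinAt_zero
    (f := fun y ↦ f y - (f' x₀ * (y - x₀) + c / 2 * (y - x₀) ^ 2))
    (fun y hy ↦ ((hf y hy).fun_sub (hq y).hasDerivWithinAt).congr_deriv
      (by rw [hf'_affine y hy, sub_self])) hx₀ hx
  simp only [sub_self, mul_zero, zero_pow two_ne_zero, add_zero, sub_zero] at h
  linear_combination h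

theorem eq_cosh_sinh_of_hasDerivWithinAt (hs : Convex ℝ s) {f f' : ℝ → ℝ} {δ : ℝ} (hδ : δ ≠ 0)
    (hf : ∀ y ∈ s, HasDerivWithinAt f (f' y) s y)
    (hf' : ∀ y ∈ s, HasDerivWithinAt f' (f y / δ ^ 2) s y) (hx₀ : x₀ ∈ s) (hx : x ∈ s) :
    f x = f x₀ * cosh ((x - x₀) / δ) + δ * f' x₀ * sinh ((x - x₀) / δ) := by
  -- `δ²D² - 1 = (δD - 1)(δD + 1)`: both `f' + f/δ` and `f' - f/δ` solve first-order equations.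
  have hp := hs.eq_mul_exp_of_hasDerivWithinAt (p := fun y ↦ f' y + f y / δ) (c := 1 / δ)
    (fun y hy ↦ ((hf' y hy).fun_add ((hf y hy).div_const δ)).congr_deriv (by field_simp; ring))
    hx₀ hx
  have hq := hs.eq_mul_exp_of_hasDerivWithinAt (p := fun y ↦ f' y - f y / δ) (c := -(1 / δ))
    (fun y hy ↦ ((hf' y hy).fun_sub ((hf y hy).div_const δ)).congr_deriv (by field_simp; ring))
    hx₀ hx
  rw [cosh_eq, sinh_eq]
  field_simp at hp hq
  linear_combination hp / 2 - hq / 2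

end Convex

section Icc

variable {a b x₀ x : ℝ} {f : ℝ → ℝ}

theorem ContDiffOn.hasDerivWithinAt_derivWithin_Icc (hab : a < b)
    (hf : ContDiffOn ℝ 2 f (Icc a b)) {g : ℝ → ℝ} (hg : ContinuousOn g (Icc a b))
    (hfg : ∀ y ∈ Ioo a b, iteratedDerivWithin 2 f (Icc a b) y = g y) (hx : x ∈ Icc a b) :
    HasDerivWithinAt (derivWithin f (Icc a b)) (g x) (Icc a b) x := by
  have hs := uniqueDiffOn_Icc hab
  have hfg' : EqOn (iteratedDerivWithin 2 f (Icc a b)) g (Icc a b) :=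
    EqOn.of_subset_closure hfg (hf.continuousOn_iteratedDerivWithin le_rfl hs) hg
      Ioo_subset_Icc_self (by rw [closure_Ioo hab.ne])
  rw [← hfg' hx, iteratedDerivWithin_eq_iterate]
  exact ((hf.derivWithin hs (m := 1) (by norm_num)).differentiableOn one_ne_zero x hx
    ).hasDerivWithinAt

theorem ContDiffOn.eq_quadratic_Icc (hab : a < b) (hf : ContDiffOn ℝ 2 f (Icc a b)) {c : ℝ}
    (hode : ∀ y ∈ Ioo a b, iteratedDerivWithin 2 f (Icc a b) y = c)
    (hx₀ : x₀ ∈ Icc a b) (hx : x ∈ Icc a b) :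
    f x = f x₀ + derivWithin f (Icc a b) x₀ * (x - x₀) + c / 2 * (x - x₀) ^ 2 :=
  (convex_Icc a b).eq_quadratic_of_hasDerivWithinAt
    (fun y hy ↦ (hf.differentiableOn two_ne_zero y hy).hasDerivWithinAt)
    (fun _ hy ↦ hf.hasDerivWithinAt_derivWithin_Icc hab continuousOn_const hode hy) hx₀ hx

theorem ContDiffOn.eq_cosh_sinh_Icc (hab : a < b) (hf : ContDiffOn ℝ 2 f (Icc a b)) {δ k : ℝ}
    (hδ : δ ≠ 0) (hode : ∀ y ∈ Ioo a b, δ ^ 2 * iteratedDerivWithin 2 f (Icc a b) y = f y - k)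
    (hx₀ : x₀ ∈ Icc a b) (hx : x ∈ Icc a b) :
    f x = k + (f x₀ - k) * Real.cosh ((x - x₀) / δ)
      + δ * derivWithin f (Icc a b) x₀ * Real.sinh ((x - x₀) / δ) := by
  have h := (convex_Icc a b).eq_cosh_sinh_of_hasDerivWithinAt (f := fun y ↦ f y - k) hδ
    (fun y hy ↦ (hf.differentiableOn two_ne_zero y hy).hasDerivWithinAt.sub_const k)
    (fun _ hy ↦ hf.hasDerivWithinAt_derivWithin_Icc hab (g := fun y ↦ (f y - k) / δ ^ 2)
      ((hf.continuousOn.sub continuousOn_const).div_const _)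
      (fun y hy ↦ by rw [← hode y hy]; field_simp) hy) hx₀ hx
  linear_combination h

end Icc

theorem iteratedDerivWithin_two_eq_of_hasDerivAt {𝕜 F : Type*} [NontriviallyNormedField 𝕜]
    [NormedAddCommGroup F] [NormedSpace 𝕜 F] {s : Set 𝕜} (hs : UniqueDiffOn 𝕜 s)
    {f f' f'' : 𝕜 → F} (hf : ∀ y, HasDerivAt f (f' y) y) (hf' : ∀ y, HasDerivAt f' (f'' y) y)
    {x : 𝕜} (hx : x ∈ s) : iteratedDerivWithin 2 f s x = f'' x := by
  rw [iteratedDerivWithin_eq_iterate, Function.iterate_succ_apply', Function.iterate_one,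
    derivWithin_congr (fun y hy ↦ (hf y).hasDerivWithinAt.derivWithin (hs y hy))
      ((hf x).hasDerivWithinAt.derivWithin (hs x hx))]
  exact (hf' x).hasDerivWithinAt.derivWithin (hs x hx)

namespace BeaversJoseph

variable (H δ η γ : ℝ)

def channelVelocity (d Z : ℝ) : ℝ := (H ^ 2 - Z ^ 2) / 2 + γ * d / 2 * (Z - H)

def porousVelocity (d Z : ℝ) : ℝ :=
  η * δ ^ 2 + ((H ^ 2 - γ * d * H) / 2 - d - η * δ ^ 2) * cosh (Z / δ)
    + γ * η * δ * d / 2 * sinh (Z / δ)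

-- The profiles with parameter `d` have interface jump `Vu 0 - Vl 0 = d` and satisfy every
-- condition of `IsBJSolution` except `Vl (-1) = 0`; this is the value of `d` that makes it hold.
def slip : ℝ :=
  (η * δ ^ 2 + (H ^ 2 / 2 - η * δ ^ 2) * cosh (1 / δ)) /
    ((1 + γ * H / 2) * cosh (1 / δ) + γ * η * δ / 2 * sinh (1 / δ))

variable {H δ η γ}

theorem porousVelocity_neg_one_eq_zero_iff (hH : 0 < H) (hδ : 0 < δ) (hη : 0 < η) (hγ : 0 < γ)
    {d : ℝ} : porousVelocity H δ η γ d (-1) = 0 ↔ d = slip H δ η γ := by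
  have hK : 0 < (1 + γ * H / 2) * cosh (1 / δ) + γ * η * δ / 2 * sinh (1 / δ) := by
    have := sinh_pos_iff.2 (one_div_pos.2 hδ)
    positivity
  rw [porousVelocity, slip, eq_div_iff hK.ne', neg_div, cosh_neg, sinh_neg]
  constructor <;> intro h <;> linear_combination -h

theorem _root_.IsBJSolution.eqOn_velocity (hH : 0 < H) (hδ : 0 < δ) (hη : 0 < η) (hγ : 0 < γ)
    {Vu Vl : ℝ → ℝ} (h : IsBJSolution H δ η γ Vu Vl) :
    EqOn Vu (channelVelocity H γ (slip H δ η γ)) (Icc 0 H) ∧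
      EqOn Vl (porousVelocity H δ η γ (slip H δ η γ)) (Icc (-1) 0) := by
  obtain ⟨hu, hl, hode_u, hode_l, hu_wall, hl_wall, hu_int, hl_int⟩ := h
  have h0u : (0 : ℝ) ∈ Icc 0 H := left_mem_Icc.2 hH.le
  have h0l : (0 : ℝ) ∈ Icc (-1) 0 := right_mem_Icc.2 (by norm_num)
  generalize hd : Vu 0 - Vl 0 = d at hu_int hl_int
  have hVu : EqOn Vu (channelVelocity H γ d) (Icc 0 H) := by
    have hquad : ∀ Z ∈ Icc 0 H, Vu Z = Vu 0 + γ * d / 2 * Z - Z ^ 2 / 2 := fun Z hZ ↦ by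
      linear_combination (hu.eq_quadratic_Icc hH (c := -1)
        (fun y hy ↦ by linear_combination hode_u y hy) h0u hZ) + Z * hu_int
    intro Z hZ
    rw [channelVelocity]
    linear_combination hquad Z hZ - hquad H (right_mem_Icc.2 hH.le) + hu_wall
  have hVl : EqOn Vl (porousVelocity H δ η γ d) (Icc (-1) 0) := by
    intro Z hZ
    have hl0 : Vl 0 = (H ^ 2 - γ * d * H) / 2 - d := by
      have hu0 := hVu h0u
      rw [channelVelocity] at hu0
      linear_combination hu0 - hd
    rw [hl.eq_cosh_sinh_Icc (by norm_num) hδ.ne' (k := η * δ ^ 2)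
      (fun y hy ↦ by linear_combination hode_l y hy) h0l hZ, hl_int, porousVelocity, sub_zero]
    linear_combination cosh (Z / δ) * hl0
  have hslip : d = slip H δ η γ :=
    (porousVelocity_neg_one_eq_zero_iff hH hδ hη hγ).1
      (hVl (left_mem_Icc.2 (by norm_num)) ▸ hl_wall)
  exact hslip ▸ ⟨hVu, hVl⟩

theorem isBJSolution_velocity (hH : 0 < H) (hδ : 0 < δ) (hη : 0 < η) (hγ : 0 < γ) :
    IsBJSolution H δ η γ (channelVelocity H γ (slip H δ η γ))
      (porousVelocity H δ η γ (slip H δ η γ)) := by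
  set d := slip H δ η γ
  set A := (H ^ 2 - γ * d * H) / 2 - d - η * δ ^ 2
  set B := γ * η * δ * d / 2
  have hsu := uniqueDiffOn_Icc hH
  have hsl := uniqueDiffOn_Icc (show (-1 : ℝ) < 0 by norm_num)
  have h0u : (0 : ℝ) ∈ Icc 0 H := left_mem_Icc.2 hH.le
  have h0l : (0 : ℝ) ∈ Icc (-1) 0 := right_mem_Icc.2 (by norm_num)
  have hcosh (Z : ℝ) : HasDerivAt (fun Z ↦ cosh (Z / δ)) (sinh (Z / δ) / δ) Z :=
    ((hasDerivAt_id Z).div_const δ).cosh.congr_deriv (by simp [div_eq_mul_inv])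
  have hsinh (Z : ℝ) : HasDerivAt (fun Z ↦ sinh (Z / δ)) (cosh (Z / δ) / δ) Z :=
    ((hasDerivAt_id Z).div_const δ).sinh.congr_deriv (by simp [div_eq_mul_inv])
  have hu' (Z : ℝ) : HasDerivAt (channelVelocity H γ d) (γ * d / 2 - Z) Z :=
    ((((hasDerivAt_pow 2 Z).const_sub _).div_const 2).add
      (((hasDerivAt_id Z).sub_const H).const_mul _)).congr_deriv (by ring)
  have hu'' (Z : ℝ) : HasDerivAt (fun Z ↦ γ * d / 2 - Z) (-1) Z :=
    (hasDerivAt_id Z).const_sub _ |>.congr_deriv (by simp)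
  have hl' (Z : ℝ) : HasDerivAt (porousVelocity H δ η γ d)
      (A / δ * sinh (Z / δ) + B / δ * cosh (Z / δ)) Z :=
    (((hcosh Z).const_mul A).const_add _ |>.add ((hsinh Z).const_mul B)).congr_deriv (by ring)
  have hl'' (Z : ℝ) : HasDerivAt (fun Z ↦ A / δ * sinh (Z / δ) + B / δ * cosh (Z / δ))
      (A / δ ^ 2 * cosh (Z / δ) + B / δ ^ 2 * sinh (Z / δ)) Z :=
    (((hsinh Z).const_mul _).add ((hcosh Z).const_mul _)).congr_deriv (by ring)
  refine ⟨?_, ?_, fun Z hZ ↦ ?_, fun Z hZ ↦ ?_, ?_, ?_, ?_, ?_⟩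
  · unfold channelVelocity
    fun_prop
  · unfold porousVelocity
    fun_prop
  · rw [iteratedDerivWithin_two_eq_of_hasDerivAt hsu hu' hu'' (Ioo_subset_Icc_self hZ)]
    ring
  · rw [iteratedDerivWithin_two_eq_of_hasDerivAt hsl hl' hl'' (Ioo_subset_Icc_self hZ),
      porousVelocity]
    field_simp
    ring
  · simp only [channelVelocity, sub_self, zero_div, mul_zero, add_zero]
  · exact (porousVelocity_neg_one_eq_zero_iff hH hδ hη hγ).2 rfl
  · rw [(hu' 0).hasDerivWithinAt.derivWithin (hsu 0 h0u)]
    simp only [channelVelocity, porousVelocity, zero_div, cosh_zero, sinh_zero]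
    ring
  · rw [(hl' 0).hasDerivWithinAt.derivWithin (hsl 0 h0l)]
    simp only [channelVelocity, porousVelocity, A, B, zero_div, cosh_zero, sinh_zero]
    field_simp
    ring

end BeaversJoseph

/-- For positive parameters `H, δ, η, γ`, the Beavers–Joseph boundary value problem has a
solution, unique as a pair of functions on the closed intervals `[0,H]` and `[−1,0]`. -/
theorem beavers_joseph_existence_uniqueness
    (H δ η γ : ℝ) (hH : 0 < H) (hδ : 0 < δ) (hη : 0 < η) (hγ : 0 < γ) :
    (∃ Vu Vl : ℝ → ℝ, IsBJSolution H δ η γ Vu Vl) ∧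
      (∀ Vu Vl Vu' Vl' : ℝ → ℝ, IsBJSolution H δ η γ Vu Vl → IsBJSolution H δ η γ Vu' Vl' →
        Set.EqOn Vu Vu' (Set.Icc 0 H) ∧ Set.EqOn Vl Vl' (Set.Icc (-1) 0)) := by
  refine ⟨⟨_, _, BeaversJoseph.isBJSolution_velocity hH hδ hη hγ⟩, fun Vu Vl Vu' Vl' h h' ↦ ?_⟩
  obtain ⟨hu, hl⟩ := h.eqOn_velocity hH hδ hη hγ
  obtain ⟨hu', hl'⟩ := h'.eqOn_velocity hH hδ hη hγ
  exact ⟨hu.trans hu'.symm, hl.trans hl'.symm⟩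
end
end
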